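/- arXiv:2007.12486 — 12 statements merged into one kernel-verified Lean document; each statement's English description precedes it below -/
import Mathlib

section
/- Let G be a closed convex subset of a real inner product space X such that εB_X ⊆ G ⊆ KB_X for some ε, K > 0. If u, w ∈ ∂G (the boundary of G) and cos(u,w) = ⟨u,w⟩/(‖u‖‖w‖) = θ > 0, then ‖u - w‖² ≤ K²(K²/ε² + 1)(1 - θ²)/θ². -/
open RealInnerProductSpace

/-!
Write `a = ‖u‖`, `b = ‖w‖`, so that `‖u - w‖² = (θa - b)² + a²(1 - θ²)`. The projection of `u` on
`ℝ w` is `c • w` with `c = θa/b`, at distance `a√(1 - θ²)` from `u`. If `c > 1`, then `c • w` is at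
distance at least `ε(c - 1)` from every point of `G`, because `G` is convex, contains `εB_X` and `w`
is not interior; hence `ε(θa - b) ≤ ab√(1 - θ²) ≤ K²√(1 - θ²)`, and the bound holds even without the
factor `1/θ²`. The case `θb ≥ a` is symmetric. Otherwise `θa < b < a/θ`, and on that interval
the convex function `b ↦ a² + b² - 2θab` is at most `a²(1 - θ²)/θ²`.
-/

theorem norm_le_of_mem_closure {E : Type*} [SeminormedAddCommGroup E] {G : Set E} {K : ℝ}
    (hGK : G ⊆ Metric.closedBall (0 : E) K) {x : E} (hx : x ∈ closure G) : ‖x‖ ≤ K :=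
  mem_closedBall_zero_iff.mp (closure_minimal hGK Metric.isClosed_closedBall hx)

theorem Convex.mul_sub_one_le_norm_sub_smul {E : Type*} [NormedAddCommGroup E] [NormedSpace ℝ E]
    {G : Set E} (hG : Convex ℝ G) {ε : ℝ} (hε : 0 ≤ ε) (hball : Metric.ball (0 : E) ε ⊆ G)
    {u w : E} (hu : u ∈ closure G) (hw : w ∉ interior G) (c : ℝ) :
    ε * (c - 1) ≤ ‖u - c • w‖ := by
  by_contra! hlt
  have hc : 0 < c - 1 := pos_of_mul_pos_right ((norm_nonneg _).trans_lt hlt) hε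
  set z := (c - 1)⁻¹ • (c • w - u)
  have hz : z ∈ interior G := by
    refine interior_maximal hball Metric.isOpen_ball ?_
    rw [mem_ball_zero_iff, norm_smul, norm_inv, Real.norm_of_nonneg hc.le, ← norm_neg, neg_sub,
      inv_mul_lt_iff₀ hc, mul_comm]
    exact hlt
  have hcomb : c⁻¹ • u + (1 - c⁻¹) • z = w := by
    have hc0 : c ≠ 0 := by linarith
    have hcoef_u : (1 - c⁻¹) * (c - 1)⁻¹ = c⁻¹ := by field_simp
    have hcoef_w : (1 - c⁻¹) * ((c - 1)⁻¹ * c) = 1 := by field_simp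
    simp only [z, smul_sub, smul_smul, hcoef_u, hcoef_w, one_smul]
    abel
  refine hw (hcomb ▸ hG.combo_closure_interior_mem_interior hu hz ?_ ?_ ?_)
  · exact inv_nonneg.mpr (by linarith)
  · exact sub_pos.mpr (inv_lt_one_of_one_lt₀ (by linarith))
  · ring

theorem norm_sub_smul_sq_of_inner_eq {X : Type*} [NormedAddCommGroup X] [InnerProductSpace ℝ X]
    {u w : X} (hw : w ≠ 0) {θ : ℝ} (hinner : ⟪u, w⟫ = θ * ‖u‖ * ‖w‖) :
    ‖u - (θ * ‖u‖ / ‖w‖) • w‖ ^ 2 = ‖u‖ ^ 2 * (1 - θ ^ 2) := by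
  have hb : ‖w‖ ≠ 0 := norm_ne_zero_iff.mpr hw
  rw [norm_sub_sq_real, real_inner_smul_right, norm_smul, Real.norm_eq_abs, mul_pow, sq_abs,
    hinner]
  field_simp
  ring

theorem Convex.sq_mul_sub_le_of_inner_eq {X : Type*} [NormedAddCommGroup X] [InnerProductSpace ℝ X]
    {G : Set X} (hG : Convex ℝ G) {ε : ℝ} (hε : 0 ≤ ε) (hball : Metric.ball (0 : X) ε ⊆ G)
    {u w : X} (hu : u ∈ closure G) (hw : w ∉ interior G) (hw0 : w ≠ 0)
    {θ : ℝ} (hinner : ⟪u, w⟫ = θ * ‖u‖ * ‖w‖) (hle : ‖w‖ ≤ θ * ‖u‖) :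
    ε ^ 2 * (θ * ‖u‖ - ‖w‖) ^ 2 ≤ ‖u‖ ^ 2 * ‖w‖ ^ 2 * (1 - θ ^ 2) := by
  have hb : 0 < ‖w‖ := norm_pos_iff.mpr hw0
  set c := θ * ‖u‖ / ‖w‖
  have hc : 0 ≤ ε * (c - 1) := mul_nonneg hε (by rw [sub_nonneg, le_div_iff₀ hb]; linarith)
  have key : (ε * (c - 1)) ^ 2 ≤ ‖u‖ ^ 2 * (1 - θ ^ 2) :=
    norm_sub_smul_sq_of_inner_eq hw0 hinner ▸
      pow_le_pow_left₀ hc (hG.mul_sub_one_le_norm_sub_smul hε hball hu hw c) 2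
  have hcb : (c - 1) * ‖w‖ = θ * ‖u‖ - ‖w‖ := by
    rw [sub_mul, div_mul_cancel₀ _ hb.ne', one_mul]
  calc ε ^ 2 * (θ * ‖u‖ - ‖w‖) ^ 2 = (ε * (c - 1)) ^ 2 * ‖w‖ ^ 2 := by rw [← hcb]; ring
    _ ≤ ‖u‖ ^ 2 * (1 - θ ^ 2) * ‖w‖ ^ 2 := by gcongr
    _ = ‖u‖ ^ 2 * ‖w‖ ^ 2 * (1 - θ ^ 2) := by ring

theorem sq_add_sq_sub_le_of_sq_mul_sub_le {a b θ ε K : ℝ} (hε : 0 < ε) (haK : a ≤ K) (hbK : b ≤ K)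
    (ha : 0 ≤ a) (hb : 0 ≤ b) (hθ0 : 0 ≤ θ) (hθ1 : θ ≤ 1)
    (hsupp : ε ^ 2 * (θ * a - b) ^ 2 ≤ a ^ 2 * b ^ 2 * (1 - θ ^ 2)) :
    a ^ 2 + b ^ 2 - 2 * θ * a * b ≤ K ^ 2 * (K ^ 2 / ε ^ 2 + 1) * (1 - θ ^ 2) := by
  have hs : 0 ≤ 1 - θ ^ 2 := by nlinarith
  have hab : a * b ≤ K ^ 2 := by nlinarith
  have hdiff : (θ * a - b) ^ 2 ≤ K ^ 4 / ε ^ 2 * (1 - θ ^ 2) := by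
    rw [div_mul_eq_mul_div, le_div_iff₀ (by positivity)]
    nlinarith [mul_le_mul hab hab (by positivity) (by positivity)]
  calc a ^ 2 + b ^ 2 - 2 * θ * a * b = (θ * a - b) ^ 2 + a ^ 2 * (1 - θ ^ 2) := by ring
    _ ≤ K ^ 4 / ε ^ 2 * (1 - θ ^ 2) + K ^ 2 * (1 - θ ^ 2) := by gcongr
    _ = K ^ 2 * (K ^ 2 / ε ^ 2 + 1) * (1 - θ ^ 2) := by ring

theorem sq_add_sq_sub_le_of_mul_lt {a b θ : ℝ} (hθ : 0 < θ) (hab : θ * a < b) (hba : θ * b < a) :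
    a ^ 2 + b ^ 2 - 2 * θ * a * b ≤ a ^ 2 * (1 - θ ^ 2) / θ ^ 2 := by
  rw [le_div_iff₀ (by positivity)]
  nlinarith [mul_pos (sub_pos.mpr hab) (sub_pos.mpr hba)]

theorem Convex.norm_sub_sq_le_of_inner_eq {X : Type*} [NormedAddCommGroup X]
    [InnerProductSpace ℝ X] {G : Set X} (hG : Convex ℝ G) {ε K : ℝ} (hε : 0 < ε)
    (hball : Metric.closedBall (0 : X) ε ⊆ G) (hGK : G ⊆ Metric.closedBall (0 : X) K)
    {u w : X} (hu : u ∈ frontier G) (hw : w ∈ frontier G) (hw0 : w ≠ 0) {θ : ℝ} (hθ0 : 0 ≤ θ)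
    (hθ1 : θ ≤ 1) (hinner : ⟪u, w⟫ = θ * ‖u‖ * ‖w‖) (hle : ‖w‖ ≤ θ * ‖u‖) :
    ‖u - w‖ ^ 2 ≤ K ^ 2 * (K ^ 2 / ε ^ 2 + 1) * (1 - θ ^ 2) := by
  have hsupp := hG.sq_mul_sub_le_of_inner_eq hε.le (Metric.ball_subset_closedBall.trans hball)
    hu.1 hw.2 hw0 hinner hle
  calc ‖u - w‖ ^ 2 = ‖u‖ ^ 2 + ‖w‖ ^ 2 - 2 * θ * ‖u‖ * ‖w‖ := by
        rw [norm_sub_sq_real, hinner]; ring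
    _ ≤ K ^ 2 * (K ^ 2 / ε ^ 2 + 1) * (1 - θ ^ 2) :=
      sq_add_sq_sub_le_of_sq_mul_sub_le hε (norm_le_of_mem_closure hGK hu.1) (norm_le_of_mem_closure hGK hw.1) (norm_nonneg u) (norm_nonneg w)
        hθ0 hθ1 hsupp

theorem stmt0_general {X : Type*} [NormedAddCommGroup X] [InnerProductSpace ℝ X]
    (G : Set X) (hGconv : Convex ℝ G)
    (ε K : ℝ) (hε : 0 < ε)
    (hball : Metric.closedBall (0 : X) ε ⊆ G) (hGK : G ⊆ Metric.closedBall (0 : X) K)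
    (u w : X) (hu : u ∈ frontier G) (hw : w ∈ frontier G)
    (θ : ℝ) (hθpos : 0 < θ) (hcos : ⟪u, w⟫ / (‖u‖ * ‖w‖) = θ) :
    ‖u - w‖ ^ 2 ≤ K ^ 2 * (K ^ 2 / ε ^ 2 + 1) * (1 - θ ^ 2) / θ ^ 2 := by
  have hu0 : u ≠ 0 := by rintro rfl; simp at hcos; linarith
  have hw0 : w ≠ 0 := by rintro rfl; simp at hcos; linarith
  have hθ1 : θ ≤ 1 := hcos ▸ (abs_le.mp (abs_real_inner_div_norm_mul_norm_le_one u w)).2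
  have hs : 0 ≤ 1 - θ ^ 2 := by nlinarith
  have hinner : ⟪u, w⟫ = θ * ‖u‖ * ‖w‖ := by
    rw [← hcos, mul_assoc, div_mul_cancel₀ _ (by positivity)]
  have hinner' : ⟪w, u⟫ = θ * ‖w‖ * ‖u‖ := by rw [real_inner_comm, hinner]; ring
  have hdiv : K ^ 2 * (K ^ 2 / ε ^ 2 + 1) * (1 - θ ^ 2)
      ≤ K ^ 2 * (K ^ 2 / ε ^ 2 + 1) * (1 - θ ^ 2) / θ ^ 2 :=
    le_div_self (mul_nonneg (by positivity) hs) (by positivity) (by nlinarith)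
  rcases le_or_gt ‖w‖ (θ * ‖u‖) with hwu | hwu
  · exact (hGconv.norm_sub_sq_le_of_inner_eq hε hball hGK hu hw hw0 hθpos.le hθ1 hinner hwu).trans
      hdiv
  rcases le_or_gt ‖u‖ (θ * ‖w‖) with huw | huw
  · rw [norm_sub_rev]
    exact (hGconv.norm_sub_sq_le_of_inner_eq hε hball hGK hw hu hu0 hθpos.le hθ1 hinner' huw).trans
      hdiv
  have huK : ‖u‖ ^ 2 ≤ K ^ 2 * (K ^ 2 / ε ^ 2 + 1) :=
    (pow_le_pow_left₀ (norm_nonneg u) (norm_le_of_mem_closure hGK hu.1) 2).trans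
      (le_mul_of_one_le_right (sq_nonneg K) (le_add_of_nonneg_left (by positivity)))
  calc ‖u - w‖ ^ 2 = ‖u‖ ^ 2 + ‖w‖ ^ 2 - 2 * θ * ‖u‖ * ‖w‖ := by
        rw [norm_sub_sq_real, hinner]; ring
    _ ≤ ‖u‖ ^ 2 * (1 - θ ^ 2) / θ ^ 2 := sq_add_sq_sub_le_of_mul_lt hθpos hwu huw
    _ ≤ K ^ 2 * (K ^ 2 / ε ^ 2 + 1) * (1 - θ ^ 2) / θ ^ 2 := by gcongr

theorem stmt0 {X : Type*} [NormedAddCommGroup X] [InnerProductSpace ℝ X]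
    (G : Set X) (hGclosed : IsClosed G) (hGconv : Convex ℝ G)
    (ε K : ℝ) (hε : 0 < ε) (hK : 0 < K)
    (hball : Metric.closedBall (0 : X) ε ⊆ G) (hGK : G ⊆ Metric.closedBall (0 : X) K)
    (u w : X) (hu : u ∈ frontier G) (hw : w ∈ frontier G)
    (θ : ℝ) (hθpos : 0 < θ) (hcos : ⟪u, w⟫ / (‖u‖ * ‖w‖) = θ) :
    ‖u - w‖ ^ 2 ≤ K ^ 2 * (K ^ 2 / ε ^ 2 + 1) * (1 - θ ^ 2) / θ ^ 2 :=
  stmt0_general G hGconv ε K hε hball hGK u w hu hw θ hθpos hcos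
end

section
/- Let η, η' ∈ (0,1) with η < η', and let δ ∈ (0,1) satisfy (δ + η)/(1 - δ) ≤ η'. If x, y are linearly independent vectors in a real inner product space with cos(x,y) ≤ η and cos(y - x, -x) ≤ δ, then ‖x‖ ≤ η'‖y‖. -/
open RealInnerProductSpace

theorem stmt1 {X : Type*} [NormedAddCommGroup X] [InnerProductSpace ℝ X]
    (η η' δ : ℝ) (hη : η ∈ Set.Ioo (0 : ℝ) 1) (hη' : η' ∈ Set.Ioo (0 : ℝ) 1)
    (hηη' : η < η') (hδ : δ ∈ Set.Ioo (0 : ℝ) 1) (hineq : (δ + η) / (1 - δ) ≤ η')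
    (x y : X) (hli : LinearIndependent ℝ ![x, y])
    (hcos1 : ⟪x, y⟫ / (‖x‖ * ‖y‖) ≤ η)
    (hcos2 : ⟪y - x, -x⟫ / (‖y - x‖ * ‖-x‖) ≤ δ) :
    ‖x‖ ≤ η' * ‖y‖ := by
  obtain ⟨hη0, hη1⟩ := hη
  obtain ⟨hη'0, hη'1⟩ := hη'
  obtain ⟨hδ0, hδ1⟩ := hδ
  have hx : x ≠ 0 := by have := hli.ne_zero 0; simpa using this
  have hy : y ≠ 0 := by have := hli.ne_zero 1; simpa using this
  rw [linearIndependent_fin2] at hli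
  have hyx : y - x ≠ 0 := by
    have := hli.2 1
    simp only [one_smul] at this
    exact sub_ne_zero_of_ne this
  have hxn : (0:ℝ) < ‖x‖ := norm_pos_iff.mpr hx
  have hyn : (0:ℝ) < ‖y‖ := norm_pos_iff.mpr hy
  have hyxn : (0:ℝ) < ‖y - x‖ := norm_pos_iff.mpr hyx
  have h1 : ⟪y - x, -x⟫ = ‖x‖^2 - ⟪x, y⟫ := by
    simp [inner_sub_left, inner_neg_right, real_inner_comm y x,
      real_inner_self_eq_norm_sq]
  have h2 : ⟪y - x, -x⟫ ≤ δ * (‖y - x‖ * ‖x‖) := by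
    have := (div_le_iff₀ (mul_pos hyxn (by simpa using hxn))).mp hcos2
    simpa [norm_neg, mul_comm] using this
  have h3 : ⟪x, y⟫ ≤ η * (‖x‖ * ‖y‖) :=
    (div_le_iff₀ (by positivity)).mp hcos1
  have htri : ‖y - x‖ ≤ ‖y‖ + ‖x‖ := norm_sub_le y x
  have h4 : (1 - δ) * ‖x‖ ≤ (δ + η) * ‖y‖ := by
    have h2' : δ * (‖y - x‖ * ‖x‖) ≤ δ * ((‖y‖ + ‖x‖) * ‖x‖) := by
      apply mul_le_mul_of_nonneg_left _ hδ0.le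
      exact mul_le_mul_of_nonneg_right htri hxn.le
    have key : ‖x‖^2 ≤ η * (‖x‖ * ‖y‖) + δ * ((‖y‖ + ‖x‖) * ‖x‖) := by nlinarith
    nlinarith [mul_pos hxn hyn, sq_nonneg (‖x‖ - ‖y‖)]
  have h5 : δ + η ≤ η' * (1 - δ) := by
    have := (div_le_iff₀ (by linarith : (0:ℝ) < 1 - δ)).mp hineq
    linarith
  nlinarith [h4, h5, hyn.le]
end

section
/- Let X be a Hilbert space and A, B nonempty closed convex subsets of X with displacement vector v = P_{cl(B-A)}(0), E = {a ∈ A : dist(a,B) = dist(A,B)}, and E nonempty. If the couple (A,B) is regular, then (A,B) is linearly regular for points bounded away from E: for each ε > 0 there exists K > 0 such that dist(x, E) ≤ K·max{dist(x,A), dist(x, B - v)} for all x with dist(x,E) ≥ ε. -/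
open Pointwise

/-- `p` is the metric projection of `x` onto the set `C`. -/
def IsProjPt {X : Type*} [NormedAddCommGroup X] (C : Set X) (x p : X) : Prop :=
  p ∈ C ∧ ∀ y ∈ C, dist x p ≤ dist x y

private lemma le_infDist_aux {X : Type*} [MetricSpace X] {s : Set X} (hs : s.Nonempty)
    {x : X} {b : ℝ} (h : ∀ y ∈ s, b ≤ dist x y) : b ≤ Metric.infDist x s :=
  le_of_not_gt fun hlt => by
    obtain ⟨y, hy, hdy⟩ := (Metric.infDist_lt_iff hs).mp hlt
    exact absurd (h y hy) (not_le.mpr hdy)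

/-- Convexity of the distance-to-a-convex-set function along a segment. -/
private lemma infDist_convex_comb {X : Type*} [NormedAddCommGroup X] [NormedSpace ℝ X]
    {S : Set X} (hS : Convex ℝ S) (hne : S.Nonempty) (p x : X) {t : ℝ}
    (ht0 : 0 ≤ t) (ht1 : t ≤ 1) :
    Metric.infDist ((1 - t) • p + t • x) S
      ≤ (1 - t) * Metric.infDist p S + t * Metric.infDist x S := by
  refine le_of_forall_pos_le_add fun ε hε => ?_
  obtain ⟨p', hp', hpd⟩ := (Metric.infDist_lt_iff hne).mp
    (show Metric.infDist p S < Metric.infDist p S + ε by linarith)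
  obtain ⟨x', hx', hxd⟩ := (Metric.infDist_lt_iff hne).mp
    (show Metric.infDist x S < Metric.infDist x S + ε by linarith)
  have hmem : (1 - t) • p' + t • x' ∈ S := hS hp' hx' (by linarith) ht0 (by ring)
  have hle : Metric.infDist ((1 - t) • p + t • x) S
      ≤ dist ((1 - t) • p + t • x) ((1 - t) • p' + t • x') :=
    Metric.infDist_le_dist_of_mem hmem
  have hdist : dist ((1 - t) • p + t • x) ((1 - t) • p' + t • x')
      ≤ (1 - t) * dist p p' + t * dist x x' := by
    have heq : ((1 - t) • p + t • x) - ((1 - t) • p' + t • x')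
        = (1 - t) • (p - p') + t • (x - x') := by module
    rw [dist_eq_norm, heq]
    calc ‖(1 - t) • (p - p') + t • (x - x')‖
        ≤ ‖(1 - t) • (p - p')‖ + ‖t • (x - x')‖ := norm_add_le _ _
      _ = (1 - t) * ‖p - p'‖ + t * ‖x - x'‖ := by
          rw [norm_smul, norm_smul, Real.norm_eq_abs, Real.norm_eq_abs,
            abs_of_nonneg (by linarith : (0:ℝ) ≤ 1 - t), abs_of_nonneg ht0]
      _ = (1 - t) * dist p p' + t * dist x x' := by rw [dist_eq_norm, dist_eq_norm]
  have h1t : (0:ℝ) ≤ 1 - t := by linarith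
  nlinarith [mul_le_mul_of_nonneg_left hpd.le h1t, mul_le_mul_of_nonneg_left hxd.le ht0]

theorem stmt3 {X : Type*} [NormedAddCommGroup X] [InnerProductSpace ℝ X] [CompleteSpace X]
    (A B : Set X) (hAne : A.Nonempty) (hBne : B.Nonempty)
    (hAc : IsClosed A) (hBc : IsClosed B) (hAconv : Convex ℝ A) (hBconv : Convex ℝ B)
    (v : X) (hv : IsProjPt (closure (B - A)) 0 v)
    (E : Set X)
    (hE : E = {a ∈ A | Metric.infDist a B = ⨅ a' : A, Metric.infDist (a' : X) B})
    (hEne : E.Nonempty)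
    (hreg : ∀ ε > (0 : ℝ), ∃ δ > (0 : ℝ), ∀ x : X,
      max (Metric.infDist x A) (Metric.infDist x ((· - v) '' B)) ≤ δ →
        Metric.infDist x E ≤ ε) :
    ∀ ε > (0 : ℝ), ∃ K > (0 : ℝ), ∀ x : X, ε ≤ Metric.infDist x E →
      Metric.infDist x E ≤ K * max (Metric.infDist x A) (Metric.infDist x ((· - v) '' B)) := by
  have hANe : Nonempty ↥A := hAne.to_subtype
  have hBAne : (B - A).Nonempty := hBne.sub hAne
  have hBAconv : Convex ℝ (closure (B - A)) := (hBconv.sub hAconv).closure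
  have hvmin : ∀ y ∈ closure (B - A), ‖v‖ ≤ ‖y‖ := by
    intro y hy
    simpa [dist_zero_left] using hv.2 y hy
  -- the infimum of distances equals ‖v‖
  have hm : (⨅ a' : A, Metric.infDist (a' : X) B) = ‖v‖ := by
    refine le_antisymm ?_ ?_
    · refine le_of_forall_pos_le_add fun η hη => ?_
      obtain ⟨y, hy, hdy⟩ := Metric.mem_closure_iff.mp hv.1 η hη
      obtain ⟨b, hb, a, ha, rfl⟩ := Set.mem_sub.mp hy
      have h1 : Metric.infDist a B ≤ ‖b - a‖ := by
        have := Metric.infDist_le_dist_of_mem (x := a) hb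
        rwa [dist_eq_norm, norm_sub_rev] at this
      have h2 : ‖b - a‖ ≤ ‖v‖ + η := by
        have : ‖b - a‖ - ‖v‖ ≤ ‖b - a - v‖ := by
          have := norm_sub_norm_le (b - a) v; linarith [abs_le.mp (abs_norm_sub_norm_le (b-a) v)]
        rw [dist_eq_norm, norm_sub_rev] at hdy
        linarith
      calc (⨅ a' : A, Metric.infDist (a' : X) B) ≤ Metric.infDist a B :=
            ciInf_le ⟨0, by rintro _ ⟨a', rfl⟩; exact Metric.infDist_nonneg⟩ (⟨a, ha⟩ : A)
        _ ≤ ‖v‖ + η := le_trans h1 h2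
    · refine le_ciInf fun a => le_infDist_aux hBne fun b hb => ?_
      have : ‖v‖ ≤ ‖b - (a : X)‖ := hvmin _ (subset_closure (Set.sub_mem_sub hb a.2))
      rwa [dist_eq_norm, norm_sub_rev]
  -- points of E are in A and in the closure of B - v (in the infDist-zero sense)
  have hEzero : ∀ p ∈ E, Metric.infDist p ((· - v) '' B) = 0 := by
    intro p hp
    rw [hE] at hp
    obtain ⟨hpA, hpd⟩ := hp
    rw [hm] at hpd
    refine le_antisymm (le_of_forall_pos_le_add fun η hη => ?_) Metric.infDist_nonneg
    set η' : ℝ := min 1 (η ^ 2 / (4 * ‖v‖ + 2)) with hη'def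
    have hη'pos : 0 < η' := lt_min one_pos (div_pos (pow_pos hη 2) (by positivity))
    have hη'1 : η' ≤ 1 := min_le_left _ _
    have hη'2 : (4 * ‖v‖ + 2) * η' ≤ η ^ 2 := by
      have h := min_le_right (1:ℝ) (η ^ 2 / (4 * ‖v‖ + 2))
      have hpos : (0:ℝ) < 4 * ‖v‖ + 2 := by positivity
      calc (4 * ‖v‖ + 2) * η' ≤ (4 * ‖v‖ + 2) * (η ^ 2 / (4 * ‖v‖ + 2)) :=
            mul_le_mul_of_nonneg_left h hpos.le
        _ = η ^ 2 := by field_simp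
    obtain ⟨q, hq, hqd⟩ := (Metric.infDist_lt_iff hBne).mp
      (show Metric.infDist p B < ‖v‖ + η' by rw [hpd]; linarith)
    set u : X := q - p with hudef
    have hu : u ∈ closure (B - A) := subset_closure (Set.sub_mem_sub hq hpA)
    have hmid : (1/2 : ℝ) • u + (1/2 : ℝ) • v ∈ closure (B - A) :=
      hBAconv hu hv.1 (by norm_num) (by norm_num) (by norm_num)
    have h2 : 2 * ‖v‖ ≤ ‖u + v‖ := by
      have hle := hvmin _ hmid
      have : (1/2 : ℝ) • u + (1/2 : ℝ) • v = (1/2 : ℝ) • (u + v) := by module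
      rw [this, norm_smul, Real.norm_eq_abs,
        abs_of_pos (by norm_num : (0:ℝ) < 1/2)] at hle
      linarith
    have h1 : ‖u‖ ≤ ‖v‖ + η' := by
      rw [dist_eq_norm, norm_sub_rev] at hqd
      exact hqd.le
    have hpar := parallelogram_law_with_norm ℝ u v
    have huv : ‖u - v‖ ≤ η := by
      nlinarith [norm_nonneg (u - v), norm_nonneg (u + v), norm_nonneg u, norm_nonneg v,
        hη.le, hη'pos.le]
    have hmemimg : q - v ∈ (· - v) '' B := ⟨q, hq, rfl⟩
    have : Metric.infDist p ((· - v) '' B) ≤ dist p (q - v) :=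
      Metric.infDist_le_dist_of_mem hmemimg
    have heq : dist p (q - v) = ‖u - v‖ := by
      rw [dist_eq_norm, ← norm_neg]
      congr 1
      simp [hudef]
      abel
    linarith [this, heq ▸ this]
  have hBvne : ((· - v) '' B).Nonempty := hBne.image _
  have hBvconv : Convex ℝ ((· - v) '' B) := by
    have : (· - v) '' B = B - {v} := by
      ext y; simp [Set.mem_sub, sub_eq_iff_eq_add, eq_comm]
    rw [this]
    exact hBconv.sub (convex_singleton v)
  -- main argument
  intro ε hε
  obtain ⟨δ, hδ, hδprop⟩ := hreg (ε / 2) (by linarith)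
  refine ⟨ε / δ, div_pos hε hδ, fun x hx => ?_⟩
  set d := Metric.infDist x E with hd
  set M := max (Metric.infDist x A) (Metric.infDist x ((· - v) '' B)) with hMdef
  by_cases hMδ : M < δ
  · have := hδprop x hMδ.le
    linarith
  · push_neg at hMδ
    have hM0 : 0 < M := lt_of_lt_of_le hδ hMδ
    set t : ℝ := δ / M with htdef
    have ht0 : 0 < t := div_pos hδ hM0
    have ht1 : t ≤ 1 := div_le_one_of_le₀ hMδ hM0.le
    obtain ⟨p, hpE, hpd⟩ := (Metric.infDist_lt_iff hEne).mp
      (show d < d + ε / 2 by linarith)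
    have hpA : p ∈ A := by rw [hE] at hpE; exact hpE.1
    set z : X := (1 - t) • p + t • x with hzdef
    have hzA : Metric.infDist z A ≤ t * M := by
      have h := infDist_convex_comb hAconv hAne p x ht0.le ht1
      rw [Metric.infDist_zero_of_mem hpA] at h
      have : Metric.infDist x A ≤ M := le_max_left _ _
      nlinarith
    have hzB : Metric.infDist z ((· - v) '' B) ≤ t * M := by
      have h := infDist_convex_comb hBvconv hBvne p x ht0.le ht1
      rw [hEzero p hpE] at h
      have : Metric.infDist x ((· - v) '' B) ≤ M := le_max_right _ _
      nlinarith
    have htM : t * M = δ := div_mul_cancel₀ δ hM0.ne'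
    have hzmax : max (Metric.infDist z A) (Metric.infDist z ((· - v) '' B)) ≤ δ := by
      rw [← htM]; exact max_le hzA hzB
    have hzE : Metric.infDist z E ≤ ε / 2 := hδprop z hzmax
    have hxz : dist x z = (1 - t) * dist x p := by
      have heq : x - z = (1 - t) • (x - p) := by rw [hzdef]; module
      rw [dist_eq_norm, heq, norm_smul, Real.norm_eq_abs,
        abs_of_nonneg (by linarith : (0:ℝ) ≤ 1 - t), ← dist_eq_norm]
    have htri : d ≤ Metric.infDist z E + dist x z := Metric.infDist_le_infDist_add_dist
    have htd : t * d ≤ ε := by nlinarith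
    have : δ * d ≤ ε * M := by
      rw [htdef, div_mul_eq_mul_div, div_le_iff₀ hM0] at htd
      linarith
    rw [div_mul_eq_mul_div, le_div_iff₀ hδ]
    linarith
end

section
/- Let X be a Hilbert space and A, B nonempty closed convex subsets with E = {a ∈ A : dist(a,B) = dist(A,B)} nonempty and bounded, and v the displacement vector. If (A,B) is boundedly regular, then (A,B) is regular. -/
/-!
Every `e ∈ E` satisfies `e + v ∈ B`: the vector `b - e`, with `b` the nearest point of `B` to `e`,
lies in `closure (B - A)` and has norm `dist(A, B) ≤ ‖v‖`, so it is the unique minimal-norm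
element `v`. Hence `A` and `B - v` share the point `e`. Pulling a point towards `e` by the
homothety of ratio `t ≤ 1` multiplies its distances to the convex sets `A` and `B - v` by at most
`t`. So a point `x` with small distances to `A` and `B - v` but far from `e` can be moved onto a
sphere around `e` whose radius exceeds that of a ball containing the bounded set `E` by more than
`ε`; bounded regularity on that ball then contradicts `dist(x, E) > ε`.
-/

open Pointwise

open Metric AffineMap

section Regularity

variable {X : Type*} [NormedAddCommGroup X] [NormedSpace ℝ X]

/-- The paper's bounded regularity (regularity) of `(A, B)` is `BoundedlyRegular A (B - v) E`
(`Regular A (B - v) E`). -/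
def BoundedlyRegular (C D E : Set X) : Prop :=
  ∀ S : Set X, Bornology.IsBounded S → ∀ ε > (0 : ℝ), ∃ δ > (0 : ℝ), ∀ x ∈ S,
    max (infDist x C) (infDist x D) ≤ δ → infDist x E ≤ ε

def Regular (C D E : Set X) : Prop :=
  ∀ ε > (0 : ℝ), ∃ δ > (0 : ℝ), ∀ x : X,
    max (infDist x C) (infDist x D) ≤ δ → infDist x E ≤ ε

theorem dist_lineMap_lineMap_right (e x y : X) {t : ℝ} (ht : 0 ≤ t) :
    dist (lineMap e x t) (lineMap e y t) = t * dist x y := by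
  rw [dist_eq_norm, dist_eq_norm, lineMap_apply_module', lineMap_apply_module',
    add_sub_add_right_eq_sub, ← smul_sub, sub_sub_sub_cancel_right, norm_smul, Real.norm_of_nonneg ht]

theorem Convex.infDist_lineMap_le {C : Set X} (hC : Convex ℝ C) {e : X} (he : e ∈ C) (x : X)
    {t : ℝ} (ht₀ : 0 < t) (ht₁ : t ≤ 1) :
    infDist (lineMap e x t) C ≤ t * infDist x C := by
  rw [← div_le_iff₀' ht₀, le_infDist ⟨e, he⟩]
  intro a ha
  rw [div_le_iff₀' ht₀, ← dist_lineMap_lineMap_right e x a ht₀.le]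
  exact infDist_le_dist_of_mem (hC.lineMap_mem he ha ⟨ht₀.le, ht₁⟩)

theorem exists_dist_eq_infDist_le_of_convex {C D : Set X} (hC : Convex ℝ C) (hD : Convex ℝ D)
    {e : X} (heC : e ∈ C) (heD : e ∈ D) {x : X} {r : ℝ} (hr : 0 < r) (hrx : r ≤ dist x e) :
    ∃ y, dist y e = r ∧
      max (infDist y C) (infDist y D) ≤ max (infDist x C) (infDist x D) := by
  have hxe : 0 < dist x e := hr.trans_le hrx
  set t := r / dist x e
  have ht₀ : 0 < t := div_pos hr hxe
  have ht₁ : t ≤ 1 := div_le_one_of_le₀ hrx hxe.le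
  have shrink {K : Set X} (hK : Convex ℝ K) (heK : e ∈ K) :
      infDist (lineMap e x t) K ≤ infDist x K :=
    (hK.infDist_lineMap_le heK x ht₀ ht₁).trans
      (mul_le_of_le_one_left infDist_nonneg ht₁)
  refine ⟨lineMap e x t, ?_, max_le_max (shrink hC heC) (shrink hD heD)⟩
  rw [dist_lineMap_left, Real.norm_of_nonneg ht₀.le, dist_comm, div_mul_cancel₀ _ hxe.ne']

theorem BoundedlyRegular.regular {C D E : Set X} (hC : Convex ℝ C) (hD : Convex ℝ D)
    {e : X} (heC : e ∈ C) (heD : e ∈ D) (hE : Bornology.IsBounded E)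
    (hreg : BoundedlyRegular C D E) : Regular C D E := by
  intro ε hε
  rcases E.eq_empty_or_nonempty with rfl | hEne
  · exact ⟨1, one_pos, fun x _ => by simpa using hε.le⟩
  obtain ⟨R, hR₀, hER⟩ := hE.subset_closedBall_lt 0 e
  obtain ⟨δ, hδ, hball⟩ := hreg (closedBall e (R + 2 * ε)) isBounded_closedBall ε hε
  refine ⟨δ, hδ, fun x hx => ?_⟩
  by_contra hxE
  have hfar : R + 2 * ε ≤ dist x e := by
    by_contra! hnear
    exact hxE (hball x (mem_closedBall.2 hnear.le) hx)
  obtain ⟨y, hye, hy⟩ := exists_dist_eq_infDist_le_of_convex hC hD heC heD (by positivity) hfar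
  have hyE : infDist y E ≤ ε := hball y (mem_closedBall.2 hye.le) (hy.trans hx)
  have hyE' : 2 * ε ≤ infDist y E := by
    refine (le_infDist hEne).2 fun z hz => ?_
    have := dist_triangle y z e
    linarith [mem_closedBall.1 (hER hz)]
  linarith

theorem Convex.eq_of_norm_le_of_forall_norm_le [StrictConvexSpace ℝ X] {K : Set X} (hK : Convex ℝ K) {u w : X}
    (hu : u ∈ K) (hw : w ∈ K) (hmin : ∀ z ∈ K, ‖u‖ ≤ ‖z‖) (hwu : ‖w‖ ≤ ‖u‖) : w = u := by
  have hnorm : ‖u‖ = ‖w‖ := le_antisymm (hmin w hw) hwu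
  have hmid : (1 / 2 : ℝ) • (u + w) ∈ K := by
    rw [smul_add]; exact hK hu hw (by norm_num) (by norm_num) (add_halves 1)
  by_contra hne
  exact (hmin _ hmid).not_gt ((norm_midpoint_lt_iff hnorm).2 (Ne.symm hne))

end Regularity

theorem add_mem_of_isProjPt_zero {X : Type*} [NormedAddCommGroup X] [InnerProductSpace ℝ X]
    [CompleteSpace X] {A B : Set X} (hBne : B.Nonempty)
    (hBc : IsClosed B) (hAconv : Convex ℝ A) (hBconv : Convex ℝ B) {v : X}
    (hv : IsProjPt (closure (B - A)) 0 v) {e : X} (heA : e ∈ A)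
    (hed : infDist e B = ⨅ a : A, infDist (a : X) B) : e + v ∈ B := by
  obtain ⟨b, hbB, hb⟩ := exists_norm_eq_iInf_of_complete_convex hBne hBc.isComplete hBconv e
  have hbe : ‖b - e‖ = infDist e B := by
    simp only [norm_sub_rev, hb, infDist_eq_iInf, dist_eq_norm]
  have hdist_le : ∀ w ∈ closure (B - A), infDist e B ≤ ‖w‖ := by
    refine fun w hw => closure_minimal ?_ (isClosed_le continuous_const continuous_norm) hw
    rintro _ ⟨b', hb', a, ha, rfl⟩
    calc infDist e B ≤ infDist (a : X) B := by
          rw [hed]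
          exact ciInf_le ⟨0, Set.forall_mem_range.2 fun _ => infDist_nonneg⟩ (⟨a, ha⟩ : A)
      _ ≤ dist a b' := infDist_le_dist_of_mem hb'
      _ = ‖b' - a‖ := dist_eq_norm' a b'
  have hmin : ∀ z ∈ closure (B - A), ‖v‖ ≤ ‖z‖ := by
    simpa only [dist_zero_left] using hv.2
  have hbe_mem : b - e ∈ closure (B - A) := subset_closure (Set.sub_mem_sub hbB heA)
  have hv_eq : b - e = v := (hBconv.sub hAconv).closure.eq_of_norm_le_of_forall_norm_le
    hv.1 hbe_mem hmin (hbe ▸ hdist_le v hv.1)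
  rwa [← hv_eq, add_sub_cancel]

theorem stmt4_general {X : Type*} [NormedAddCommGroup X] [InnerProductSpace ℝ X] [CompleteSpace X]
    (A B : Set X) (hBne : B.Nonempty)
    (hBc : IsClosed B) (hAconv : Convex ℝ A) (hBconv : Convex ℝ B)
    (v : X) (hv : IsProjPt (closure (B - A)) 0 v)
    (E : Set X)
    (hE : E = {a ∈ A | Metric.infDist a B = ⨅ a' : A, Metric.infDist (a' : X) B})
    (hEne : E.Nonempty) (hEbdd : Bornology.IsBounded E)
    (hbreg : ∀ S : Set X, Bornology.IsBounded S → ∀ ε > (0 : ℝ), ∃ δ > (0 : ℝ), ∀ x ∈ S,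
      max (Metric.infDist x A) (Metric.infDist x ((· - v) '' B)) ≤ δ →
        Metric.infDist x E ≤ ε) :
    ∀ ε > (0 : ℝ), ∃ δ > (0 : ℝ), ∀ x : X,
      max (Metric.infDist x A) (Metric.infDist x ((· - v) '' B)) ≤ δ →
        Metric.infDist x E ≤ ε := by
  obtain ⟨e, heE⟩ := hEne
  rw [hE] at heE
  have hev : e + v ∈ B := add_mem_of_isProjPt_zero hBne hBc hAconv hBconv hv heE.1 heE.2
  have hBv : Convex ℝ ((· - v) '' B) := by
    simpa only [sub_eq_neg_add, add_comm] using hBconv.translate (-v)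
  exact BoundedlyRegular.regular hAconv hBv heE.1 ⟨e + v, hev, add_sub_cancel_right e v⟩
    hEbdd hbreg

theorem stmt4 {X : Type*} [NormedAddCommGroup X] [InnerProductSpace ℝ X] [CompleteSpace X]
    (A B : Set X) (hAne : A.Nonempty) (hBne : B.Nonempty)
    (hAc : IsClosed A) (hBc : IsClosed B) (hAconv : Convex ℝ A) (hBconv : Convex ℝ B)
    (v : X) (hv : IsProjPt (closure (B - A)) 0 v)
    (E : Set X)
    (hE : E = {a ∈ A | Metric.infDist a B = ⨅ a' : A, Metric.infDist (a' : X) B})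
    (hEne : E.Nonempty) (hEbdd : Bornology.IsBounded E)
    (hbreg : ∀ S : Set X, Bornology.IsBounded S → ∀ ε > (0 : ℝ), ∃ δ > (0 : ℝ), ∀ x ∈ S,
      max (Metric.infDist x A) (Metric.infDist x ((· - v) '' B)) ≤ δ →
        Metric.infDist x E ≤ ε) :
    ∀ ε > (0 : ℝ), ∃ δ > (0 : ℝ), ∀ x : X,
      max (Metric.infDist x A) (Metric.infDist x ((· - v) '' B)) ≤ δ →
        Metric.infDist x E ≤ ε :=
  stmt4_general A B hBne hBc hAconv hBconv v hv E hE hEne hEbdd hbreg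
end

section
/- Let X be a Hilbert space and A, B nonempty closed convex subsets with E = {a ∈ A : dist(a,B) = dist(A,B)} nonempty, and v the displacement vector. If (A,B) is linearly regular for points bounded away from E, then (A,B) is regular. -/
open Pointwise

theorem stmt5 {X : Type*} [NormedAddCommGroup X] [InnerProductSpace ℝ X] [CompleteSpace X]
    (A B : Set X) (hAne : A.Nonempty) (hBne : B.Nonempty)
    (hAc : IsClosed A) (hBc : IsClosed B) (hAconv : Convex ℝ A) (hBconv : Convex ℝ B)
    (v : X) (hv : IsProjPt (closure (B - A)) 0 v)
    (E : Set X)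
    (hE : E = {a ∈ A | Metric.infDist a B = ⨅ a' : A, Metric.infDist (a' : X) B})
    (hEne : E.Nonempty)
    (hlinreg : ∀ ε > (0 : ℝ), ∃ K > (0 : ℝ), ∀ x : X, ε ≤ Metric.infDist x E →
      Metric.infDist x E ≤ K * max (Metric.infDist x A) (Metric.infDist x ((· - v) '' B))) :
    ∀ ε > (0 : ℝ), ∃ δ > (0 : ℝ), ∀ x : X,
      max (Metric.infDist x A) (Metric.infDist x ((· - v) '' B)) ≤ δ →
        Metric.infDist x E ≤ ε := by
  intro ε hε
  obtain ⟨K, hK, hbound⟩ := hlinreg ε hε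
  refine ⟨ε / K, div_pos hε hK, fun x hx => ?_⟩
  by_cases h : ε ≤ Metric.infDist x E
  · have h1 := hbound x h
    have h2 := mul_le_mul_of_nonneg_left hx hK.le
    have h3 : K * (ε / K) = ε := by field_simp
    linarith
  · linarith [not_le.mp h]
end

section
/- Let X be a Hilbert space, A, B nonempty closed convex subsets, v = P_{cl(B-A)}(0) the displacement vector, E = {a ∈ A : dist(a,B) = dist(A,B)} and F = {b ∈ B : dist(b,A) = dist(A,B)}, both nonempty. Then ‖v‖ = dist(A,B) and E + v = F. -/
/-!
Every vector `b - a` with `a ∈ A`, `b ∈ B` lies in `cl(B - A)`, so `‖v‖` is the infimum of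
`‖b - a‖`, i.e. `dist(A,B)`. If `a ∈ E`, its nearest point `b` in `B` gives a vector `b - a` of
`cl(B - A)` of norm `dist(A,B) = ‖v‖`; by strict convexity of the norm the minimal-norm vector
of a convex set is unique, so `b - a = v` and `a + v = b ∈ F`. Symmetrically, projecting
`b ∈ F` onto `A` shows `b - v ∈ E`.
-/

open Pointwise

open Metric

lemma IsProjPt.dist_eq_infDist {X : Type*} [NormedAddCommGroup X] {C : Set X} {x p : X}
    (hp : IsProjPt C x p) : dist x p = infDist x C :=
  le_antisymm ((le_infDist ⟨p, hp.1⟩).2 hp.2) (infDist_le_dist_of_mem hp.1)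

lemma IsProjPt.eq_of_mem_of_dist_eq {X : Type*} [NormedAddCommGroup X] [NormedSpace ℝ X]
    [StrictConvexSpace ℝ X] {C : Set X} (hC : Convex ℝ C) {x p q : X} (hp : IsProjPt C x p)
    (hq : q ∈ C) (h : dist x q = dist x p) : q = p := by
  by_contra hne
  have hmid : (1 / 2 : ℝ) • p + (1 / 2 : ℝ) • q ∈ C :=
    hC hp.1 hq (by norm_num) (by norm_num) (by norm_num)
  have hnorm : ‖x - p‖ = ‖x - q‖ := by rw [← dist_eq_norm, ← dist_eq_norm, h]
  have hlt := (norm_midpoint_lt_iff hnorm).2 fun heq => hne (sub_right_injective heq).symm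
  have hle := hp.2 _ hmid
  rw [dist_eq_norm, dist_eq_norm] at hle
  have hsplit : x - ((1 / 2 : ℝ) • p + (1 / 2 : ℝ) • q) = (1 / 2 : ℝ) • (x - p + (x - q)) := by
    module
  rw [hsplit] at hle
  exact hle.not_gt hlt

lemma IsClosed.exists_dist_eq_infDist_of_convex {X : Type*} [NormedAddCommGroup X]
    [InnerProductSpace ℝ X] [CompleteSpace X] {K : Set X} (hK : IsClosed K) (hne : K.Nonempty)
    (hconv : Convex ℝ K) (x : X) : ∃ p ∈ K, dist x p = infDist x K := by
  obtain ⟨p, hpK, hp⟩ := exists_norm_eq_iInf_of_complete_convex hne hK.isComplete hconv x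
  refine ⟨p, hpK, ?_⟩
  simp only [dist_eq_norm, hp, infDist_eq_iInf]

section SetDistance

variable {X : Type*} [PseudoMetricSpace X] {A B : Set X}

lemma iInf_infDist_le_infDist {a : X} (ha : a ∈ A) :
    ⨅ a' : A, infDist (a' : X) B ≤ infDist a B :=
  ciInf_le ⟨0, by rintro _ ⟨_, rfl⟩; exact infDist_nonneg⟩ (⟨a, ha⟩ : A)

lemma iInf_infDist_le_dist {a b : X} (ha : a ∈ A) (hb : b ∈ B) :
    ⨅ a' : A, infDist (a' : X) B ≤ dist a b :=
  (iInf_infDist_le_infDist ha).trans (infDist_le_dist_of_mem hb)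

lemma infDist_eq_iInf_infDist_of_dist_eq {a b : X} (ha : a ∈ A) (hb : b ∈ B)
    (h : dist a b = ⨅ a' : A, infDist (a' : X) B) :
    infDist a B = ⨅ a' : A, infDist (a' : X) B ∧ infDist b A = ⨅ a' : A, infDist (a' : X) B := by
  refine ⟨le_antisymm (h ▸ infDist_le_dist_of_mem hb) (iInf_infDist_le_infDist ha),
    le_antisymm ?_ ?_⟩
  · exact (infDist_le_dist_of_mem ha).trans_eq (dist_comm b a ▸ h)
  · exact (le_infDist ⟨a, ha⟩).2 fun a' ha' => dist_comm a' b ▸ iInf_infDist_le_dist ha' hb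

end SetDistance

lemma iInf_infDist_eq_infDist_zero_sub {G : Type*} [SeminormedAddCommGroup G] {A B : Set G}
    (hA : A.Nonempty) (hB : B.Nonempty) :
    ⨅ a : A, infDist (a : G) B = infDist 0 (B - A) := by
  have : Nonempty A := hA.to_subtype
  apply le_antisymm
  · refine (le_infDist (hB.sub hA)).2 ?_
    rintro _ ⟨b, hb, a, ha, rfl⟩
    rw [dist_zero_left, ← dist_eq_norm']
    exact iInf_infDist_le_dist ha hb
  · refine le_ciInf fun a => (le_infDist hB).2 fun b hb => ?_
    calc infDist 0 (B - A) ≤ dist 0 (b - a) := infDist_le_dist_of_mem (Set.sub_mem_sub hb a.2)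
      _ = dist (a : G) b := by rw [dist_zero_left, ← dist_eq_norm']

theorem stmt6_general {X : Type*} [NormedAddCommGroup X] [InnerProductSpace ℝ X] [CompleteSpace X]
    (A B : Set X) (hAne : A.Nonempty) (hBne : B.Nonempty)
    (hAc : IsClosed A) (hBc : IsClosed B) (hAconv : Convex ℝ A) (hBconv : Convex ℝ B)
    (v : X) (hv : IsProjPt (closure (B - A)) 0 v)
    (E F : Set X)
    (hE : E = {a ∈ A | Metric.infDist a B = ⨅ a' : A, Metric.infDist (a' : X) B})
    (hF : F = {b ∈ B | Metric.infDist b A = ⨅ a' : A, Metric.infDist (a' : X) B}) :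
    ‖v‖ = (⨅ a' : A, Metric.infDist (a' : X) B) ∧ (· + v) '' E = F := by
  set d := ⨅ a' : A, infDist (a' : X) B
  have hnorm : ‖v‖ = d :=
    calc ‖v‖ = infDist 0 (closure (B - A)) := by rw [← hv.dist_eq_infDist, dist_zero_left]
      _ = d := by rw [infDist_closure]; exact (iInf_infDist_eq_infDist_zero_sub hAne hBne).symm
  have hdisp : ∀ a ∈ A, ∀ b ∈ B, dist a b = d → a + v = b := fun a ha b hb hab => by
    rw [← hv.eq_of_mem_of_dist_eq (hBconv.sub hAconv).closure
      (subset_closure (Set.sub_mem_sub hb ha)) (by rw [dist_zero_left, ← dist_eq_norm', hab,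
        ← hnorm, dist_zero_left])]
    abel
  refine ⟨hnorm, ?_⟩
  subst hE hF
  ext b
  constructor
  · rintro ⟨a, ⟨ha, had⟩, rfl⟩
    obtain ⟨b, hb, hab⟩ := hBc.exists_dist_eq_infDist_of_convex hBne hBconv a
    show a + v ∈ _
    rw [hdisp a ha b hb (hab.trans had)]
    exact ⟨hb, (infDist_eq_iInf_infDist_of_dist_eq ha hb (hab.trans had)).2⟩
  · rintro ⟨hb, hbd⟩
    obtain ⟨a, ha, hba⟩ := hAc.exists_dist_eq_infDist_of_convex hAne hAconv b
    have hab : dist a b = d := by rw [dist_comm, hba, hbd]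
    exact ⟨a, ⟨ha, (infDist_eq_iInf_infDist_of_dist_eq ha hb hab).1⟩, hdisp a ha b hb hab⟩

theorem stmt6 {X : Type*} [NormedAddCommGroup X] [InnerProductSpace ℝ X] [CompleteSpace X]
    (A B : Set X) (hAne : A.Nonempty) (hBne : B.Nonempty)
    (hAc : IsClosed A) (hBc : IsClosed B) (hAconv : Convex ℝ A) (hBconv : Convex ℝ B)
    (v : X) (hv : IsProjPt (closure (B - A)) 0 v)
    (E F : Set X)
    (hE : E = {a ∈ A | Metric.infDist a B = ⨅ a' : A, Metric.infDist (a' : X) B})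
    (hF : F = {b ∈ B | Metric.infDist b A = ⨅ a' : A, Metric.infDist (a' : X) B})
    (hEne : E.Nonempty) (hFne : F.Nonempty) :
    ‖v‖ = (⨅ a' : A, Metric.infDist (a' : X) B) ∧ (· + v) '' E = F :=
  stmt6_general A B hAne hBne hAc hBc hAconv hBconv v hv E F hE hF
end

section
/- Let X be a Hilbert space, A, B nonempty closed convex subsets, v the displacement vector, E = {a ∈ A : dist(a,B) = dist(A,B)}. Then E = Fix(P_A ∘ P_B) = A ∩ (B - v), where Fix denotes the fixed point set. -/
open Pointwise

open RealInnerProductSpace Metric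

private lemma le_infDist' {X : Type*} [MetricSpace X] {s : Set X} {x : X} {b : ℝ}
    (hs : s.Nonempty) (h : ∀ y ∈ s, b ≤ dist x y) : b ≤ Metric.infDist x s := by
  by_contra hlt
  push_neg at hlt
  obtain ⟨y, hy, hxy⟩ := (Metric.infDist_lt_iff hs).1 hlt
  exact absurd hxy (not_lt.2 (h y hy))

private lemma isProjPt_inner_le {X : Type*} [NormedAddCommGroup X] [InnerProductSpace ℝ X]
    {C : Set X} (hC : Convex ℝ C) {x p : X} (h : IsProjPt C x p) :
    ∀ y ∈ C, ⟪x - p, y - p⟫ ≤ 0 := by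
  rw [← norm_eq_iInf_iff_real_inner_le_zero hC h.1]
  have : Nonempty C := ⟨⟨p, h.1⟩⟩
  apply le_antisymm
  · exact le_ciInf fun w => by simpa [dist_eq_norm] using h.2 w w.2
  · exact ciInf_le ⟨0, by rintro r ⟨w, rfl⟩; exact norm_nonneg _⟩ (⟨p, h.1⟩ : C)

private lemma isProjPt_unique {X : Type*} [NormedAddCommGroup X] [InnerProductSpace ℝ X]
    {C : Set X} (hC : Convex ℝ C) {x p q : X}
    (hp : IsProjPt C x p) (hq : IsProjPt C x q) : p = q := by
  have h1 := isProjPt_inner_le hC hp q hq.1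
  have h2 := isProjPt_inner_le hC hq p hp.1
  have key : ⟪q - p, q - p⟫ ≤ 0 := by
    have e : ⟪q - p, q - p⟫ = ⟪x - p, q - p⟫ - ⟪x - q, q - p⟫ := by
      rw [← inner_sub_left]
      congr 1
      abel
    have e2 : ⟪x - q, p - q⟫ = -⟪x - q, q - p⟫ := by
      rw [← inner_neg_right, neg_sub]
    linarith
  have h0 : ⟪q - p, q - p⟫ = 0 := le_antisymm key real_inner_self_nonneg
  have := inner_self_eq_zero (𝕜 := ℝ).1 h0
  rw [sub_eq_zero] at this
  exact this.symm

theorem stmt7 {X : Type*} [NormedAddCommGroup X] [InnerProductSpace ℝ X] [CompleteSpace X]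
    (A B : Set X) (hAne : A.Nonempty) (hBne : B.Nonempty)
    (hAc : IsClosed A) (hBc : IsClosed B) (hAconv : Convex ℝ A) (hBconv : Convex ℝ B)
    (v : X) (hv : IsProjPt (closure (B - A)) 0 v)
    (PA PB : X → X)
    (hPA : ∀ x : X, IsProjPt A x (PA x)) (hPB : ∀ x : X, IsProjPt B x (PB x))
    (E : Set X)
    (hE : E = {a ∈ A | Metric.infDist a B = ⨅ a' : A, Metric.infDist (a' : X) B}) :
    E = Function.fixedPoints (PA ∘ PB) ∧ E = A ∩ ((· - v) '' B) := by
  have hnA : Nonempty A := hAne.to_subtype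
  -- basic distance lower bound
  have key1 : ∀ a ∈ A, ∀ b ∈ B, ‖v‖ ≤ ‖b - a‖ := by
    intro a ha b hb
    have hmem : b - a ∈ closure (B - A) := subset_closure (Set.sub_mem_sub hb ha)
    have := hv.2 _ hmem
    rwa [dist_eq_norm, dist_eq_norm, zero_sub, zero_sub, norm_neg, norm_neg] at this
  have key2 : ∀ a ∈ A, ‖v‖ ≤ Metric.infDist a B := by
    intro a ha
    refine le_infDist' hBne fun b hb => ?_
    rw [dist_eq_norm, norm_sub_rev]
    exact key1 a ha b hb
  -- the infimum equals ‖v‖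
  have hd : (⨅ a' : A, Metric.infDist (a' : X) B) = ‖v‖ := by
    apply le_antisymm
    · refine le_of_forall_pos_le_add fun ε hε => ?_
      obtain ⟨y, hy, hdy⟩ := Metric.mem_closure_iff.1 hv.1 ε hε
      obtain ⟨b, hb, a, ha, rfl⟩ := Set.mem_sub.1 hy
      have hbdd : BddBelow (Set.range fun a' : A => Metric.infDist (a' : X) B) :=
        ⟨0, fun _ ⟨_, hh⟩ => hh ▸ Metric.infDist_nonneg⟩
      calc (⨅ a' : A, Metric.infDist (a' : X) B) ≤ Metric.infDist a B := ciInf_le hbdd ⟨a, ha⟩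
        _ ≤ dist a b := Metric.infDist_le_dist_of_mem hb
        _ = ‖b - a‖ := by rw [dist_eq_norm, norm_sub_rev]
        _ ≤ ‖v‖ + ε := by
            have h1 : ‖b - a‖ ≤ ‖v‖ + ‖b - a - v‖ := by
              have := norm_add_le v (b - a - v)
              simpa using this
            have h2 : ‖b - a - v‖ < ε := by
              rw [dist_eq_norm, norm_sub_rev] at hdy
              exact hdy
            linarith
    · exact le_ciInf fun a => key2 a a.2
  -- infDist is attained at PB
  have hPBd : ∀ a : X, Metric.infDist a B = dist a (PB a) := by
    intro a
    refine le_antisymm (Metric.infDist_le_dist_of_mem (hPB a).1) ?_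
    exact le_infDist' hBne fun b hb => (hPB a).2 b hb
  -- key : if a realizes minimal distance, then PB a = a + v
  have fixE : ∀ a ∈ A, Metric.infDist a B = ‖v‖ → PB a = a + v := by
    intro a ha hda
    have hwn : ‖PB a - a‖ = ‖v‖ := by
      rw [← norm_sub_rev, ← dist_eq_norm, ← hPBd a, hda]
    have hw : IsProjPt (closure (B - A)) 0 (PB a - a) := by
      refine ⟨subset_closure (Set.sub_mem_sub (hPB a).1 ha), fun y hy => ?_⟩
      simp only [dist_eq_norm, zero_sub, norm_neg]
      rw [hwn]
      have := hv.2 y hy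
      simp only [dist_eq_norm, zero_sub, norm_neg] at this
      exact this
    have hvw := isProjPt_unique ((hBconv.sub hAconv).closure) hv hw
    rw [hvw]
    abel
  -- E = A ∩ (B - v)
  have hES2 : E = A ∩ ((· - v) '' B) := by
    ext a
    rw [hE]
    simp only [Set.mem_setOf_eq, Set.mem_inter_iff, Set.mem_image]
    constructor
    · rintro ⟨ha, hda⟩
      rw [hd] at hda
      have hPBa := fixE a ha hda
      exact ⟨ha, PB a, (hPB a).1, by rw [hPBa]; abel⟩
    · rintro ⟨ha, b, hb, rfl⟩
      refine ⟨ha, ?_⟩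
      rw [hd]
      apply le_antisymm
      · calc Metric.infDist (b - v) B ≤ dist (b - v) b := Metric.infDist_le_dist_of_mem hb
          _ = ‖v‖ := by simp [dist_eq_norm]
      · exact key2 _ ha
  refine ⟨?_, hES2⟩
  -- E = Fix (PA ∘ PB)
  ext a
  constructor
  · intro haE
    rw [hE] at haE
    obtain ⟨ha, hda⟩ := haE
    rw [hd] at hda
    have hPBa := fixE a ha hda
    have hproj : IsProjPt A (PB a) a := by
      refine ⟨ha, fun y hy => ?_⟩
      have hk := key1 y hy (a + v) (hPBa ▸ (hPB a).1)
      rw [hPBa, dist_eq_norm, dist_eq_norm]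
      have e1 : a + v - a = v := by abel
      rw [e1]
      exact hk
    have hfp : PA (PB a) = a := isProjPt_unique hAconv (hPA (PB a)) hproj
    exact hfp
  · intro hfix
    have hfa : PA (PB a) = a := hfix
    set b := PB a with hb_def
    have ha : a ∈ A := hfa ▸ (hPA b).1
    have hprojA : IsProjPt A b a := hfa ▸ hPA b
    have h1 := isProjPt_inner_le hAconv hprojA
    have h2 := isProjPt_inner_le hBconv (hPB a)
    have key3 : ∀ y ∈ B - A, ‖b - a‖ ^ 2 ≤ ⟪b - a, y⟫ := by
      intro y hy
      obtain ⟨b', hb', a', ha', rfl⟩ := Set.mem_sub.1 hy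
      have e : b' - a' = (b' - b) + (b - a) + (a - a') := by abel
      rw [e, inner_add_right, inner_add_right]
      have t1 : 0 ≤ ⟪b - a, b' - b⟫ := by
        have := h2 b' hb'
        have e2 : ⟪a - b, b' - b⟫ = -⟪b - a, b' - b⟫ := by
          rw [← inner_neg_left, neg_sub]
        linarith
      have t2 : 0 ≤ ⟪b - a, a - a'⟫ := by
        have := h1 a' ha'
        have e2 : ⟪b - a, a' - a⟫ = -⟪b - a, a - a'⟫ := by
          rw [← inner_neg_right, neg_sub]
        linarith
      have t3 : ⟪b - a, b - a⟫ = ‖b - a‖ ^ 2 := real_inner_self_eq_norm_sq _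
      linarith
    have key4 : ‖b - a‖ ^ 2 ≤ ⟪b - a, v⟫ := by
      have hcl : closure (B - A) ⊆ {y | ‖b - a‖ ^ 2 ≤ ⟪b - a, y⟫} := by
        apply closure_minimal key3
        have hcont : Continuous fun y : X => ⟪b - a, y⟫ :=
          Continuous.inner continuous_const continuous_id
        exact isClosed_le continuous_const hcont
      exact hcl hv.1
    have hb_le : ‖b - a‖ ≤ ‖v‖ := by
      rcases eq_or_ne (b - a) 0 with h0 | h0
      · simp [h0]
      · have hcs := real_inner_le_norm (b - a) v
        have hpos : 0 < ‖b - a‖ := norm_pos_iff.2 h0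
        nlinarith
    rw [hE]
    refine ⟨ha, ?_⟩
    rw [hd]
    apply le_antisymm
    · calc Metric.infDist a B ≤ dist a b := Metric.infDist_le_dist_of_mem (hPB a).1
        _ = ‖b - a‖ := by rw [dist_eq_norm, norm_sub_rev]
        _ ≤ ‖v‖ := hb_le
    · exact key2 a ha
end

section
/- Let X be a Hilbert space, A, B nonempty closed convex subsets. Suppose there exist e ∈ A ∩ (B - v) (v the displacement vector) and a norm-one continuous linear functional x* with inf x*(B - v) = x*(e) = sup x*(A), and such that x* strongly exposes A at e. Then the couple (A,B) is regular. -/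
/-!
Since `f` is sandwiched, `f ≤ f e` on `A` and `f e ≤ f` on `B - v`, a point close to both sets has
nearby points `a ∈ A` and `c ∈ B - v` with `f e - f a ≤ f c - f a` small, by uniform continuity
of `f`. Strong exposure, upgraded from sequences to a uniform statement, then forces `a`, hence
the point, close to `e`. Finally `e ∈ E`: its distance `‖v‖` to `B` is the minimal distance
between `A` and `B`, because `v` is the minimal-norm element of `cl (B - A)`.
-/

open Pointwise

open Filter Topology Metric

def StronglyExposes {X : Type*} [PseudoMetricSpace X] (f : X → ℝ) (A : Set X) (e : X) : Prop :=
  e ∈ A ∧ (∀ a ∈ A, f a ≤ f e) ∧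
    ∀ x : ℕ → X, (∀ n, x n ∈ A) → Tendsto (fun n => f (x n)) atTop (𝓝 (f e)) →
      Tendsto x atTop (𝓝 e)

namespace StronglyExposes

variable {X : Type*} [PseudoMetricSpace X] {f : X → ℝ} {A : Set X} {e : X}

theorem exists_pos_forall_dist_lt (h : StronglyExposes f A e) :
    ∀ ε > 0, ∃ η > 0, ∀ a ∈ A, f e - η < f a → dist a e < ε := by
  by_contra! hcon
  obtain ⟨ε, hε, hfar⟩ := hcon
  choose a haA hfa hdist using fun n : ℕ => hfar (1 / ((n : ℝ) + 1)) (by positivity)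
  have hfa_tendsto : Tendsto (fun n => f (a n)) atTop (𝓝 (f e)) := by
    refine tendsto_of_tendsto_of_tendsto_of_le_of_le ?_ tendsto_const_nhds
      (fun n => (hfa n).le) (fun n => h.2.1 _ (haA n))
    simpa using tendsto_const_nhds.sub (tendsto_one_div_add_atTop_nhds_zero_nat (𝕜 := ℝ))
  obtain ⟨n, hn⟩ := ((h.2.2 a haA hfa_tendsto).eventually (ball_mem_nhds e hε)).exists
  exact (hdist n).not_gt hn

theorem exists_pos_forall_dist_le (h : StronglyExposes f A e) (hf : UniformContinuous f)
    {C : Set X} (hC : C.Nonempty) (hfC : ∀ c ∈ C, f e ≤ f c) :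
    ∀ ε > 0, ∃ δ > 0, ∀ x, max (infDist x A) (infDist x C) ≤ δ → dist x e ≤ ε := by
  intro ε hε
  obtain ⟨η, hη, hexp⟩ := h.exists_pos_forall_dist_lt (ε / 2) (half_pos hε)
  obtain ⟨ρ, hρ, hfρ⟩ := Metric.uniformContinuous_iff.1 hf η hη
  set δ := min (ε / 4) (ρ / 4)
  have hδ : 0 < δ := by positivity
  refine ⟨δ, hδ, fun x hx => ?_⟩
  obtain ⟨a, haA, hxa⟩ := (infDist_lt_iff ⟨e, h.1⟩).1
    (show infDist x A < 2 * δ by linarith [le_max_left (infDist x A) (infDist x C)])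
  obtain ⟨c, hcC, hxc⟩ := (infDist_lt_iff hC).1
    (show infDist x C < 2 * δ by linarith [le_max_right (infDist x A) (infDist x C)])
  have hac : dist a c < ρ := by
    linarith [dist_triangle_left a c x, min_le_right (ε / 4) (ρ / 4)]
  have hfac : f c - f a < η := by
    have := hfρ hac
    rw [Real.dist_eq, abs_sub_comm] at this
    exact (abs_lt.1 this).2
  have hae : dist a e < ε / 2 := hexp a haA (by linarith [hfC c hcC])
  linarith [dist_triangle x a e, min_le_left (ε / 4) (ρ / 4)]

end StronglyExposes

theorem norm_le_norm_of_isProjPt_zero {X : Type*} [NormedAddCommGroup X] {S : Set X} {v y : X}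
    (hv : IsProjPt (closure S) 0 v) (hy : y ∈ S) : ‖v‖ ≤ ‖y‖ := by
  simpa using hv.2 y (subset_closure hy)

theorem infDist_eq_iInf_infDist_of_forall_norm_le {X : Type*} [NormedAddCommGroup X]
    {A B : Set X} {v b : X} (hb : b ∈ B) (hbA : b - v ∈ A)
    (hv : ∀ a ∈ A, ∀ b ∈ B, ‖v‖ ≤ ‖b - a‖) :
    infDist (b - v) B = ⨅ a : A, infDist (a : X) B := by
  have : Nonempty A := ⟨⟨b - v, hbA⟩⟩
  have hbdd : BddBelow (Set.range fun a : A => infDist (a : X) B) := by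
    refine ⟨0, ?_⟩
    rintro r ⟨a, rfl⟩
    exact infDist_nonneg
  refine le_antisymm (le_ciInf fun a => ?_) (ciInf_le hbdd (⟨b - v, hbA⟩ : A))
  calc infDist (b - v) B ≤ dist (b - v) b := infDist_le_dist_of_mem hb
    _ = ‖v‖ := by simp
    _ ≤ infDist (a : X) B := (le_infDist ⟨b, hb⟩).2 fun b' hb' => by
        rw [dist_eq_norm']
        exact hv a a.2 b' hb'

theorem stmt9_general {X : Type*} [NormedAddCommGroup X] [InnerProductSpace ℝ X]
    (A B : Set X)
    (v : X) (hv : IsProjPt (closure (B - A)) 0 v)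
    (E : Set X)
    (hE : E = {a ∈ A | Metric.infDist a B = ⨅ a' : A, Metric.infDist (a' : X) B})
    (e : X) (he : e ∈ A ∩ ((· - v) '' B))
    (f : X →L[ℝ] ℝ)
    (hinf : ∀ b ∈ (· - v) '' B, f e ≤ f b) (hsup : ∀ a ∈ A, f a ≤ f e)
    (hexp : ∀ x : ℕ → X, (∀ n, x n ∈ A) →
      Filter.Tendsto (fun n => f (x n)) Filter.atTop (nhds (f e)) →
      Filter.Tendsto x Filter.atTop (nhds e)) :
    ∀ ε > (0 : ℝ), ∃ δ > (0 : ℝ), ∀ x : X,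
      max (Metric.infDist x A) (Metric.infDist x ((· - v) '' B)) ≤ δ →
        Metric.infDist x E ≤ ε := by
  obtain ⟨heA, b, hb, rfl⟩ := he
  have heE : b - v ∈ E := by
    rw [hE]
    exact ⟨heA, infDist_eq_iInf_infDist_of_forall_norm_le hb heA
      fun a ha b' hb' => norm_le_norm_of_isProjPt_zero hv (Set.sub_mem_sub hb' ha)⟩
  have hexposes : StronglyExposes f A (b - v) := ⟨heA, hsup, hexp⟩
  intro ε hε
  obtain ⟨δ, hδ, hreg⟩ := hexposes.exists_pos_forall_dist_le f.uniformContinuous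
    ((Set.nonempty_of_mem hb).image (· - v)) hinf ε hε
  exact ⟨δ, hδ, fun x hx => (infDist_le_dist_of_mem heE).trans (hreg x hx)⟩

theorem stmt9 {X : Type*} [NormedAddCommGroup X] [InnerProductSpace ℝ X] [CompleteSpace X]
    (A B : Set X) (hAne : A.Nonempty) (hBne : B.Nonempty)
    (hAc : IsClosed A) (hBc : IsClosed B) (hAconv : Convex ℝ A) (hBconv : Convex ℝ B)
    (v : X) (hv : IsProjPt (closure (B - A)) 0 v)
    (E : Set X)
    (hE : E = {a ∈ A | Metric.infDist a B = ⨅ a' : A, Metric.infDist (a' : X) B})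
    (e : X) (he : e ∈ A ∩ ((· - v) '' B))
    (f : X →L[ℝ] ℝ) (hf : ‖f‖ = 1)
    (hinf : ∀ b ∈ (· - v) '' B, f e ≤ f b) (hsup : ∀ a ∈ A, f a ≤ f e)
    (hexp : ∀ x : ℕ → X, (∀ n, x n ∈ A) →
      Filter.Tendsto (fun n => f (x n)) Filter.atTop (nhds (f e)) →
      Filter.Tendsto x Filter.atTop (nhds e)) :
    ∀ ε > (0 : ℝ), ∃ δ > (0 : ℝ), ∀ x : X,
      max (Metric.infDist x A) (Metric.infDist x ((· - v) '' B)) ≤ δ →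
        Metric.infDist x E ≤ ε :=
  stmt9_general A B v hv E hE e he f hinf hsup hexp
end

section
/- Let A be a body (closed convex set with nonempty interior) in a normed space Z and let a ∈ ∂A be an LUR point of A. If f ∈ S_{Z*} is a support functional for A at a (i.e., f(a) = sup f(A)), then f strongly exposes A at a. -/
theorem stmt11 {Z : Type*} [NormedAddCommGroup Z] [NormedSpace ℝ Z]
    (A : Set Z) (hAc : IsClosed A) (hAconv : Convex ℝ A) (hAint : (interior A).Nonempty)
    (a : Z) (ha : a ∈ frontier A)
    (hLUR : ∀ ε > (0 : ℝ), ∃ δ > (0 : ℝ), ∀ y ∈ A,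
      Metric.infDist (midpoint ℝ a y) (frontier A) < δ → ‖a - y‖ < ε)
    (f : Z →L[ℝ] ℝ) (hf : ‖f‖ = 1) (hsupp : ∀ y ∈ A, f y ≤ f a) :
    ∀ x : ℕ → Z, (∀ n, x n ∈ A) →
      Filter.Tendsto (fun n => f (x n)) Filter.atTop (nhds (f a)) →
      Filter.Tendsto x Filter.atTop (nhds a) := by
  intro x hx hfx
  have haA : a ∈ A := hAc.frontier_subset ha
  -- Key estimate: for any m ∈ A, infDist m (frontier A) ≤ f a - f m
  have key : ∀ m ∈ A, Metric.infDist m (frontier A) ≤ f a - f m := by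
    intro m hm
    by_contra h
    push_neg at h
    set D := Metric.infDist m (frontier A) with hD
    have hc0 : 0 ≤ f a - f m := sub_nonneg.2 (hsupp m hm)
    have hD0 : 0 < D := lt_of_le_of_lt hc0 h
    -- the ball of radius D around m avoids the frontier
    have hball_front : ∀ p ∈ Metric.ball m D, p ∉ frontier A := by
      intro p hp hpf
      have h3 : Metric.infDist m (frontier A) ≤ dist m p := Metric.infDist_le_dist_of_mem hpf
      rw [Metric.mem_ball, dist_comm] at hp
      exact absurd (lt_of_le_of_lt h3 hp) (lt_irrefl _)
    -- m ∈ interior A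
    have hmint : m ∈ interior A := by
      have hmf : m ∉ frontier A := by
        intro hmf
        have : D = 0 := Metric.infDist_zero_of_mem hmf
        exact absurd (this ▸ hD0) (lt_irrefl _)
      by_contra hmint
      exact hmf ⟨subset_closure hm, hmint⟩
    -- the ball is contained in A
    have hball : Metric.ball m D ⊆ A := by
      have hsub : Metric.ball m D ⊆ interior A ∪ (closure A)ᶜ := by
        intro p hp
        by_cases h1 : p ∈ interior A
        · exact Or.inl h1
        · refine Or.inr fun h2 => hball_front p hp ⟨h2, h1⟩
      have := IsPreconnected.subset_left_of_subset_union
        isOpen_interior (isClosed_closure.isOpen_compl)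
        (by
          rw [Set.disjoint_left]
          intro p hp hpc
          exact hpc (interior_subset_closure hp))
        hsub ⟨m, Metric.mem_ball_self hD0, hmint⟩
        (convex_ball m D).isPreconnected
      exact this.trans interior_subset
    -- pick r between f a - f m and D
    obtain ⟨r, hr1, hr2⟩ := exists_between h
    have hr0 : 0 < r := lt_of_le_of_lt hc0 hr1
    -- pick u with ‖u‖ < 1 and (f a - f m)/r < ‖f u‖
    have hlt : (f a - f m) / r < ‖f‖ := by
      rw [hf, div_lt_one hr0]; exact hr1
    obtain ⟨u, hu1, hu2⟩ := f.exists_lt_apply_of_lt_opNorm hlt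
    -- choose sign so that f v > (f a - f m)/r with ‖v‖ < 1
    obtain ⟨v, hv1, hv2⟩ : ∃ v : Z, ‖v‖ < 1 ∧ (f a - f m) / r < f v := by
      rcases le_or_gt 0 (f u) with h' | h'
      · exact ⟨u, hu1, by rwa [Real.norm_eq_abs, abs_of_nonneg h'] at hu2⟩
      · refine ⟨-u, by rwa [norm_neg], ?_⟩
        rw [map_neg]
        rwa [Real.norm_eq_abs, abs_of_neg h'] at hu2
    -- then m + r • v ∈ ball m D ⊆ A but f (m + r•v) > f a
    have hmem : m + r • v ∈ Metric.ball m D := by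
      rw [Metric.mem_ball, dist_eq_norm, add_sub_cancel_left, norm_smul,
        Real.norm_eq_abs, abs_of_pos hr0]
      calc r * ‖v‖ < r * 1 := by
            exact mul_lt_mul_of_pos_left hv1 hr0
        _ = r := mul_one r
        _ < D := hr2
    have hfa : f a < f (m + r • v) := by
      rw [map_add, map_smul, smul_eq_mul]
      have : f a - f m < r * f v := by
        rw [← div_lt_iff₀' hr0]; exact hv2
      linarith
    exact absurd (hsupp _ (hball hmem)) (not_le.2 hfa)
  -- compute f at the midpoint
  have hfmid : ∀ y : Z, f (midpoint ℝ a y) = (f a + f y) / 2 := by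
    intro y
    rw [midpoint_eq_smul_add, map_smul, map_add, smul_eq_mul, invOf_eq_inv]
    ring
  -- now the main convergence
  rw [NormedAddCommGroup.tendsto_atTop]
  intro ε hε
  obtain ⟨δ, hδ0, hδ⟩ := hLUR ε hε
  rw [NormedAddCommGroup.tendsto_atTop] at hfx
  obtain ⟨N, hN⟩ := hfx (2 * δ) (by linarith)
  refine ⟨N, fun n hn => ?_⟩
  have hmidA : midpoint ℝ a (x n) ∈ A :=
    hAconv.segment_subset haA (hx n) (midpoint_mem_segment a (x n))
  have h1 : Metric.infDist (midpoint ℝ a (x n)) (frontier A) ≤ (f a - f (x n)) / 2 := by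
    have := key _ hmidA
    rw [hfmid] at this
    linarith
  have h2 : (f a - f (x n)) / 2 < δ := by
    have := hN n hn
    rw [Real.norm_eq_abs] at this
    have := abs_lt.1 this
    linarith [this.1, this.2]
  have := hδ (x n) (hx n) (lt_of_le_of_lt h1 h2)
  rwa [norm_sub_rev] at this
end

section
/- Let X be a Hilbert space, A, B nonempty closed convex subsets with A ∩ B ≠ ∅, and suppose (A,B) is regular (with v = 0, E = A ∩ B). Then for any starting point c₀, the alternating projection sequences c_n = P_A(d_n), d_n = P_B(c_{n-1}) satisfy dist(c_n, A ∩ B) → 0 and dist(d_n, A ∩ B) → 0. -/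
open Filter Topology Metric

theorem IsProjPt.dist_sq_add_dist_sq_le {X : Type*} [NormedAddCommGroup X]
    [InnerProductSpace ℝ X] {C : Set X} (hC : Convex ℝ C) {x p z : X} (h : IsProjPt C x p)
    (hz : z ∈ C) : dist x p ^ 2 + dist p z ^ 2 ≤ dist x z ^ 2 := by
  obtain ⟨hp, hmin⟩ := h
  simp only [dist_eq_norm] at hmin ⊢
  have : Nonempty C := ⟨⟨p, hp⟩⟩
  have hinf : ‖x - p‖ = ⨅ w : C, ‖x - w‖ :=
    le_antisymm (le_ciInf fun w => hmin w w.2)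
      (ciInf_le ⟨0, Set.forall_mem_range.2 fun _ => norm_nonneg _⟩ (⟨p, hp⟩ : C))
  have hobtuse : inner ℝ (x - p) (z - p) ≤ 0 :=
    (norm_eq_iInf_iff_real_inner_le_zero hC hp).1 hinf z hz
  calc ‖x - p‖ ^ 2 + ‖p - z‖ ^ 2
    _ ≤ ‖x - p‖ ^ 2 - 2 * inner ℝ (x - p) (z - p) + ‖p - z‖ ^ 2 := by linarith
    _ = ‖(x - p) + (p - z)‖ ^ 2 := by
        rw [norm_add_sq_real, ← neg_sub p z, inner_neg_right]; ring
    _ = ‖x - z‖ ^ 2 := by rw [sub_add_sub_cancel]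

theorem tendsto_zero_of_add_succ_le {u e : ℕ → ℝ} (hu : ∀ n, 0 ≤ u n) (he : ∀ n, 0 ≤ e n)
    (h : ∀ n, e n + u (n + 1) ≤ u n) : Tendsto e atTop (𝓝 0) := by
  have hanti : Antitone u := antitone_nat_of_succ_le fun n => by linarith [h n, he n]
  have hlim := tendsto_atTop_ciInf hanti ⟨0, Set.forall_mem_range.2 hu⟩
  have hdiff : Tendsto (fun n => u n - u (n + 1)) atTop (𝓝 0) := by
    simpa using hlim.sub ((tendsto_add_atTop_iff_nat 1).2 hlim)
  exact squeeze_zero he (fun n => by linarith [h n]) hdiff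

theorem tendsto_zero_of_sq_le {ι : Type*} {l : Filter ι} {a s : ι → ℝ} (ha : ∀ i, 0 ≤ a i)
    (has : ∀ i, a i ^ 2 ≤ s i) (hs : Tendsto s l (𝓝 0)) : Tendsto a l (𝓝 0) :=
  squeeze_zero ha (fun i => Real.le_sqrt_of_sq_le (has i)) (by simpa using hs.sqrt)

theorem tendsto_infDist_inter_of_regular {X ι : Type*} [PseudoMetricSpace X] {A B : Set X}
    (hreg : ∀ ε > (0 : ℝ), ∃ δ > (0 : ℝ), ∀ x : X,
      max (infDist x A) (infDist x B) ≤ δ → infDist x (A ∩ B) ≤ ε)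
    {l : Filter ι} {x : ι → X} (hA : Tendsto (fun i => infDist (x i) A) l (𝓝 0))
    (hB : Tendsto (fun i => infDist (x i) B) l (𝓝 0)) :
    Tendsto (fun i => infDist (x i) (A ∩ B)) l (𝓝 0) := by
  refine tendsto_order.2 ⟨fun a ha => .of_forall fun i => ha.trans_le infDist_nonneg,
    fun ε hε => ?_⟩
  obtain ⟨δ, hδ, hx⟩ := hreg (ε / 2) (half_pos hε)
  filter_upwards [(hA.max hB).eventually (ge_mem_nhds (by simpa using hδ))] with i hi
  linarith [hx (x i) hi]

theorem tendsto_infDist_of_tendsto_dist {X ι : Type*} [PseudoMetricSpace X] {C : Set X}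
    {l : Filter ι} {x y : ι → X} (hy : ∀ i, y i ∈ C)
    (hxy : Tendsto (fun i => dist (x i) (y i)) l (𝓝 0)) :
    Tendsto (fun i => infDist (x i) C) l (𝓝 0) :=
  squeeze_zero (fun _ => infDist_nonneg) (fun i => infDist_le_dist_of_mem (hy i)) hxy

theorem stmt12_general {X : Type*} [NormedAddCommGroup X] [InnerProductSpace ℝ X]
    (A B : Set X)
    (hAconv : Convex ℝ A) (hBconv : Convex ℝ B)
    (hABne : (A ∩ B).Nonempty)
    (hreg : ∀ ε > (0 : ℝ), ∃ δ > (0 : ℝ), ∀ x : X,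
      max (Metric.infDist x A) (Metric.infDist x B) ≤ δ → Metric.infDist x (A ∩ B) ≤ ε)
    (c d : ℕ → X)
    (hd : ∀ n : ℕ, IsProjPt B (c n) (d (n + 1)))
    (hc : ∀ n : ℕ, IsProjPt A (d (n + 1)) (c (n + 1))) :
    Filter.Tendsto (fun n => Metric.infDist (c n) (A ∩ B)) Filter.atTop (nhds 0) ∧
    Filter.Tendsto (fun n => Metric.infDist (d n) (A ∩ B)) Filter.atTop (nhds 0) := by
  obtain ⟨z, hzA, hzB⟩ := hABne
  have hsteps : Tendsto
      (fun n => dist (c n) (d (n + 1)) ^ 2 + dist (d (n + 1)) (c (n + 1)) ^ 2) atTop (𝓝 0) :=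
    tendsto_zero_of_add_succ_le (u := fun n => dist (c n) z ^ 2) (fun _ => by positivity)
      (fun _ => by positivity) fun n => by
        linarith [(hd n).dist_sq_add_dist_sq_le hBconv hzB,
          (hc n).dist_sq_add_dist_sq_le hAconv hzA]
  have hcd : Tendsto (fun n => dist (c n) (d (n + 1))) atTop (𝓝 0) :=
    tendsto_zero_of_sq_le (fun _ => dist_nonneg)
      (fun _ => le_add_of_nonneg_right (sq_nonneg _)) hsteps
  have hdc : Tendsto (fun n => dist (d (n + 1)) (c (n + 1))) atTop (𝓝 0) :=
    tendsto_zero_of_sq_le (fun _ => dist_nonneg)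
      (fun _ => le_add_of_nonneg_left (sq_nonneg _)) hsteps
  constructor
  · refine (tendsto_add_atTop_iff_nat 1).1 (tendsto_infDist_inter_of_regular hreg ?_ ?_)
    · exact tendsto_const_nhds.congr fun n => (infDist_zero_of_mem (hc n).1).symm
    · exact tendsto_infDist_of_tendsto_dist (fun n => (hd (n + 1)).1)
        ((tendsto_add_atTop_iff_nat 1).2 hcd)
  · refine (tendsto_add_atTop_iff_nat 1).1 (tendsto_infDist_inter_of_regular hreg ?_ ?_)
    · exact tendsto_infDist_of_tendsto_dist (fun n => (hc n).1) hdc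
    · exact tendsto_const_nhds.congr fun n => (infDist_zero_of_mem (hd n).1).symm

theorem stmt12 {X : Type*} [NormedAddCommGroup X] [InnerProductSpace ℝ X] [CompleteSpace X]
    (A B : Set X)
    (hAc : IsClosed A) (hBc : IsClosed B) (hAconv : Convex ℝ A) (hBconv : Convex ℝ B)
    (hABne : (A ∩ B).Nonempty)
    (hreg : ∀ ε > (0 : ℝ), ∃ δ > (0 : ℝ), ∀ x : X,
      max (Metric.infDist x A) (Metric.infDist x B) ≤ δ → Metric.infDist x (A ∩ B) ≤ ε)
    (c d : ℕ → X)
    (hd : ∀ n : ℕ, IsProjPt B (c n) (d (n + 1)))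
    (hc : ∀ n : ℕ, IsProjPt A (d (n + 1)) (c (n + 1))) :
    Filter.Tendsto (fun n => Metric.infDist (c n) (A ∩ B)) Filter.atTop (nhds 0) ∧
    Filter.Tendsto (fun n => Metric.infDist (d n) (A ∩ B)) Filter.atTop (nhds 0) :=
  stmt12_general A B hAconv hBconv hABne hreg c d hd hc
end

section
/- Let U, V be closed subspaces of a Hilbert space X with U ∩ V = {0} and U + V closed. Then the couple (U, V) is regular: for each ε > 0 there exists δ > 0 such that ‖x‖ ≤ ε whenever max{dist(x,U), dist(x,V)} ≤ δ. -/
/-!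
The addition map `U × V → X` is injective with closed range `U + V`, so by the open mapping
theorem it is anti-Lipschitz: `‖u‖ ≤ C ‖u + v‖` for `u ∈ U`, `v ∈ V`. If `u ∈ U` and `v ∈ V` are
within `r` of `x`, then `‖x‖ ≤ ‖x - u‖ + C ‖u - v‖ ≤ (1 + 2C) r`, so `δ = ε / (1 + 2C)` works.
-/

open Pointwise Metric NNReal

theorem Submodule.exists_norm_le_mul_norm_add {𝕜 E : Type*} [NontriviallyNormedField 𝕜]
    [NormedAddCommGroup E] [NormedSpace 𝕜 E] [CompleteSpace E] {U V : Submodule 𝕜 E}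
    (hU : IsClosed (U : Set E)) (hV : IsClosed (V : Set E)) (hUV : Disjoint U V)
    (hsum : IsClosed ((U : Set E) + (V : Set E))) :
    ∃ C : ℝ≥0, ∀ u ∈ U, ∀ v ∈ V, ‖u‖ ≤ C * ‖u + v‖ := by
  have : CompleteSpace U := hU.completeSpace_coe
  have : CompleteSpace V := hV.completeSpace_coe
  set add : U × V →L[𝕜] E := U.subtypeL.coprod V.subtypeL
  have hinj : Function.Injective add := by
    rw [← add.coe_coe, ← LinearMap.ker_eq_bot, ContinuousLinearMap.coe_coprod,
      LinearMap.ker_coprod_of_disjoint_range] <;> simp [hUV]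
  have hrange : Set.range add = (U : Set E) + (V : Set E) := by
    rw [← add.coe_coe, ← LinearMap.coe_range, ContinuousLinearMap.coe_coprod,
      LinearMap.range_coprod, Submodule.coe_sup]
    simp
  obtain ⟨C, hC⟩ := add.antilipschitz_of_injective_of_isClosed_range hinj (hrange ▸ hsum)
  refine ⟨C, fun u hu v hv => ?_⟩
  calc ‖u‖ = ‖(⟨u, hu⟩ : U)‖ := rfl
    _ ≤ ‖((⟨u, hu⟩, ⟨v, hv⟩) : U × V)‖ := le_max_left _ _
    _ ≤ C * ‖add (⟨u, hu⟩, ⟨v, hv⟩)‖ := hC.le_mul_norm (map_zero add) _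
    _ = C * ‖u + v‖ := rfl

theorem norm_le_mul_max_infDist {E : Type*} [SeminormedAddCommGroup E] {s t : Set E}
    (hs : s.Nonempty) (ht : t.Nonempty) {C : ℝ} (hC : 0 ≤ C)
    (h : ∀ u ∈ s, ∀ v ∈ t, ‖u‖ ≤ C * ‖u - v‖) (x : E) :
    ‖x‖ ≤ (1 + 2 * C) * max (infDist x s) (infDist x t) := by
  rw [← div_le_iff₀' (by positivity)]
  refine le_of_forall_gt_imp_ge_of_dense fun r hr => ?_
  obtain ⟨u, hu, hxu⟩ := (infDist_lt_iff hs).1 ((le_max_left _ _).trans_lt hr)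
  obtain ⟨v, hv, hxv⟩ := (infDist_lt_iff ht).1 ((le_max_right _ _).trans_lt hr)
  rw [dist_eq_norm] at hxu hxv
  rw [div_le_iff₀' (by positivity)]
  calc ‖x‖ ≤ ‖x - u‖ + ‖u‖ := norm_le_norm_sub_add x u
    _ ≤ ‖x - u‖ + C * (‖x - u‖ + ‖x - v‖) := by
      grw [h u hu v hv, norm_sub_le_norm_sub_add_norm_sub u x v, norm_sub_rev u x]
    _ ≤ (1 + 2 * C) * r := by nlinarith

theorem stmt14 {X : Type*} [NormedAddCommGroup X] [InnerProductSpace ℝ X] [CompleteSpace X]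
    (U V : Submodule ℝ X) (hUc : IsClosed (U : Set X)) (hVc : IsClosed (V : Set X))
    (hUV : U ⊓ V = ⊥) (hsum : IsClosed ((U : Set X) + (V : Set X))) :
    ∀ ε > (0 : ℝ), ∃ δ > (0 : ℝ), ∀ x : X,
      max (Metric.infDist x (U : Set X)) (Metric.infDist x (V : Set X)) ≤ δ → ‖x‖ ≤ ε := by
  intro ε hε
  obtain ⟨C, hC⟩ := U.exists_norm_le_mul_norm_add hUc hVc (disjoint_iff.mpr hUV) hsum
  have hCsub : ∀ u ∈ (U : Set X), ∀ v ∈ (V : Set X), ‖u‖ ≤ C * ‖u - v‖ := fun u hu v hv => by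
    simpa only [sub_eq_add_neg] using hC u hu (-v) (V.neg_mem hv)
  refine ⟨ε / (1 + 2 * C), by positivity, fun x hx => ?_⟩
  calc ‖x‖ ≤ (1 + 2 * C) * max (infDist x U) (infDist x V) :=
        norm_le_mul_max_infDist ⟨0, U.zero_mem⟩ ⟨0, V.zero_mem⟩ C.2 hCsub x
    _ ≤ (1 + 2 * C) * (ε / (1 + 2 * C)) := by gcongr
    _ = ε := by field_simp
end

section
/- Let X be a Hilbert space, A, B nonempty closed convex subsets, v the displacement vector, E = A ∩ (B - v) nonempty. Then for all e ∈ E and a ∈ A, ⟨v, a - e⟩ ≤ 0. -/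
open Pointwise RealInnerProductSpace

/-!
The displacement vector `v` is the nearest point of the convex set `closure (B - A)` to `0`, so
the variational inequality of the projection gives `‖v‖² ≤ ⟪v, b - a⟫` for all `a ∈ A`, `b ∈ B`.
For `e = b - v ∈ E` this is exactly `⟪v, a - e⟫ ≤ 0`.
-/

section

variable {X : Type*} [NormedAddCommGroup X] [InnerProductSpace ℝ X]

theorem IsProjPt.real_inner_sub_le_zero {C : Set X} {x p : X} (hC : Convex ℝ C)
    (hp : IsProjPt C x p) : ∀ y ∈ C, ⟪x - p, y - p⟫ ≤ 0 := by
  have : Nonempty C := ⟨⟨p, hp.1⟩⟩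
  refine (norm_eq_iInf_iff_real_inner_le_zero hC hp.1).1 (le_antisymm ?_ ?_)
  · exact le_ciInf fun y => by simpa only [dist_eq_norm] using hp.2 y y.2
  · exact ciInf_le ⟨0, fun _ ⟨_, h⟩ => h ▸ norm_nonneg _⟩ (⟨p, hp.1⟩ : C)

theorem IsProjPt.norm_sq_le_real_inner_of_zero {C : Set X} {v : X} (hC : Convex ℝ C)
    (hv : IsProjPt C 0 v) {w : X} (hw : w ∈ C) : ‖v‖ ^ 2 ≤ ⟪v, w⟫ := by
  have h := hv.real_inner_sub_le_zero hC w hw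
  rw [zero_sub, inner_neg_left, inner_sub_right, real_inner_self_eq_norm_sq] at h
  linarith

theorem norm_sq_le_real_inner_sub_of_isProjPt_closure_sub {A B : Set X}
    (hA : Convex ℝ A) (hB : Convex ℝ B) {v : X} (hv : IsProjPt (closure (B - A)) 0 v)
    {a b : X} (ha : a ∈ A) (hb : b ∈ B) : ‖v‖ ^ 2 ≤ ⟪v, b - a⟫ :=
  hv.norm_sq_le_real_inner_of_zero (hB.sub hA).closure (subset_closure (Set.sub_mem_sub hb ha))

end

theorem stmt19_general {X : Type*} [NormedAddCommGroup X] [InnerProductSpace ℝ X]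
    (A B : Set X)
    (hAconv : Convex ℝ A) (hBconv : Convex ℝ B)
    (v : X) (hv : IsProjPt (closure (B - A)) 0 v)
    (E : Set X) (hE : E = A ∩ ((· - v) '' B)) :
    ∀ e ∈ E, ∀ a ∈ A, ⟪v, a - e⟫ ≤ 0 := by
  rintro e he a ha
  obtain ⟨-, b, hb, rfl⟩ := hE ▸ he
  have h := norm_sq_le_real_inner_sub_of_isProjPt_closure_sub hAconv hBconv hv ha hb
  have hsplit : ⟪v, a - (b - v)⟫ = ‖v‖ ^ 2 - ⟪v, b - a⟫ := by
    rw [← real_inner_self_eq_norm_sq, ← inner_sub_right]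
    congr 1
    abel
  linarith

theorem stmt19 {X : Type*} [NormedAddCommGroup X] [InnerProductSpace ℝ X] [CompleteSpace X]
    (A B : Set X) (hAne : A.Nonempty) (hBne : B.Nonempty)
    (hAc : IsClosed A) (hBc : IsClosed B) (hAconv : Convex ℝ A) (hBconv : Convex ℝ B)
    (v : X) (hv : IsProjPt (closure (B - A)) 0 v)
    (E : Set X) (hE : E = A ∩ ((· - v) '' B)) (hEne : E.Nonempty) :
    ∀ e ∈ E, ∀ a ∈ A, ⟪v, a - e⟫ ≤ 0 :=
  stmt19_general A B hAconv hBconv v hv E hE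
end
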